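/- For every integer d' ≥ 5 there exists a (5(d'−1)+3)-number USV1B5 in M_{5×d'}, i.e., a family of 5(d'−1)+3 matrices {A_i} in the space of 5×d' complex matrices, each satisfying A_i·A_iᴴ = I_5, with Tr(A_iᴴ A_j) = 5·δ_{ij} for all i, j, such that every B ∈ M_{5×d'} with Tr(A_iᴴ B) = 0 for all i does not satisfy B·Bᴴ = I_5. Equivalently, there is a (5(d'−1)+3)-number unextendible maximally entangled basis (UMEB) in ℂ^5 ⊗ ℂ^{d'}. -/

import Mathlib

/-!
Put the entries of `v ∈ ℂ⁵` on the cyclic diagonal `{(j, j + b)}` of a `5 × d'` matrix. Such a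
matrix satisfies `A Aᴴ = 1` iff `v` is unimodular, and matrices on different diagonals are
orthogonal. On each of the `d' - 1` diagonals `b ≠ 0` we place the five rows of the Fourier
matrix, on the diagonal `b = 0` three orthogonal unimodular vectors `u₀, u₁, u₂`. A matrix `B`
orthogonal to all of these vanishes off the diagonal `0`, because the Fourier rows span `ℂ⁵`;
so `B Bᴴ = 1` would give a unimodular `t ⊥ u₀, u₁, u₂`. The `uᵣ` extend to an orthogonal basis
by `p = (√2, 0, 1, 1, 1)` and `q = (0, √2, 1, ω, ω²)`, hence `t = αp + βq`. As
`|t₀|² = 2|α|²` and `|t₁|² = 2|β|²`, unimodularity of `t₂ = α + β` and `t₃ = α + ωβ` reads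
`|α + β|² = |α + ωβ|² = |α|² + |β|²`, i.e. `Re(αβ̄) = Re(ω̄αβ̄) = 0`. This forces `αβ̄ = 0`,
although `|α|² = |β|² = 1/2`.
-/

open Matrix ComplexConjugate

section ShiftDiagonal

variable {ι G : Type*} [AddCommGroup G] [DecidableEq G]

def shiftDiag (e : ι → G) (b : G) (v : ι → ℂ) : Matrix ι G ℂ :=
  of fun j k => if k = e j + b then v j else 0

theorem eq_shiftDiag_of_forall_ne (B : Matrix ι G ℂ) (e : ι → G) (b₀ : G)
    (h : ∀ b ≠ b₀, ∀ j, B j (e j + b) = 0) : B = shiftDiag e b₀ fun j => B j (e j + b₀) := by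
  ext j k
  by_cases hk : k = e j + b₀
  · simp [shiftDiag, hk]
  · simpa [shiftDiag, hk] using h (k - e j) (by rintro rfl; simp at hk) j

variable [Fintype G]

theorem shiftDiag_mul_conjTranspose [DecidableEq ι] {e : ι → G} (he : Function.Injective e)
    (b : G) (v : ι → ℂ) :
    shiftDiag e b v * (shiftDiag e b v)ᴴ = diagonal fun j => v j * star (v j) := by
  ext j j'
  simp only [mul_apply, shiftDiag, conjTranspose_apply, of_apply, diagonal_apply]
  split_ifs with h
  · simp [h]
  · simp [apply_ite star, he.eq_iff, Ne.symm h]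

theorem shiftDiag_mul_conjTranspose_eq_one_iff [DecidableEq ι] {e : ι → G}
    (he : Function.Injective e) (b : G) (v : ι → ℂ) :
    shiftDiag e b v * (shiftDiag e b v)ᴴ = 1 ↔ ∀ j, v j * star (v j) = 1 := by
  rw [shiftDiag_mul_conjTranspose he, ← diagonal_one, diagonal_eq_diagonal_iff]

variable [Fintype ι]

theorem trace_conjTranspose_shiftDiag_mul (e : ι → G) (b : G) (v : ι → ℂ) (B : Matrix ι G ℂ) :
    ((shiftDiag e b v)ᴴ * B).trace = ∑ j, star (v j) * B j (e j + b) := by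
  simp only [trace, diag, mul_apply, conjTranspose_apply, shiftDiag, of_apply]
  rw [Finset.sum_comm]
  simp [apply_ite star]

theorem trace_conjTranspose_shiftDiag_mul_shiftDiag (e : ι → G) (b c : G) (v w : ι → ℂ) :
    ((shiftDiag e b v)ᴴ * shiftDiag e c w).trace = if b = c then star v ⬝ᵥ w else 0 := by
  rw [trace_conjTranspose_shiftDiag_mul]
  split_ifs with h
  · simp [shiftDiag, dotProduct, h]
  · simp [shiftDiag, h]

end ShiftDiagonal

section OrthogonalRows

variable {ι : Type*} [Fintype ι]

theorem star_dotProduct_eq_ite_of_mul_conjTranspose {κ : Type*} [DecidableEq κ]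
    {U : Matrix κ ι ℂ} {c : ℂ} (hU : U * Uᴴ = c • 1) (r r' : κ) :
    star (U r) ⬝ᵥ U r' = if r = r' then c else 0 := by
  have h := congrFun (congrFun hU r') r
  simp only [mul_apply, conjTranspose_apply, Matrix.smul_apply, one_apply, smul_eq_mul,
    mul_ite, mul_one, mul_zero] at h
  simp only [dotProduct, Pi.star_apply, mul_comm (star _), h, eq_comm]

def IsUnimodularOrthogonal {κ : Type*} [DecidableEq κ] (U : Matrix κ ι ℂ) : Prop :=
  (∀ r j, U r j * star (U r j) = 1) ∧ U * Uᴴ = (Fintype.card ι : ℂ) • 1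

variable [DecidableEq ι]

theorem smul_eq_sum_star_dotProduct_smul {M : Matrix ι ι ℂ} {c : ℂ} (hc : c ≠ 0)
    (hM : M * Mᴴ = c • 1) (x : ι → ℂ) : c • x = ∑ i, (star (M i) ⬝ᵥ x) • M i := by
  have hM' : Mᴴ * M = c • 1 := by
    have h : M * (c⁻¹ • Mᴴ) = 1 := by
      rw [mul_smul_comm, hM, smul_smul, inv_mul_cancel₀ hc, one_smul]
    rw [mul_eq_one_comm, smul_mul_assoc, inv_smul_eq_iff₀ hc] at h
    exact h
  ext j
  have hj := fun k => congrFun (congrFun hM' k) j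
  simp only [mul_apply, conjTranspose_apply, Matrix.smul_apply, one_apply, smul_eq_mul] at hj
  simp only [Pi.smul_apply, smul_eq_mul, Finset.sum_apply, dotProduct, Pi.star_apply,
    Finset.sum_mul, mul_assoc]
  rw [Finset.sum_comm]
  simp only [mul_comm (x _), ← mul_assoc, ← Finset.sum_mul, hj]
  simp

theorem eq_zero_of_forall_star_dotProduct_eq_zero {M : Matrix ι ι ℂ} {c : ℂ} (hc : c ≠ 0)
    (hM : M * Mᴴ = c • 1) {x : ι → ℂ} (hx : ∀ i, star (M i) ⬝ᵥ x = 0) : x = 0 := by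
  have h := smul_eq_sum_star_dotProduct_smul hc hM x
  simp only [hx, zero_smul, Finset.sum_const_zero] at h
  exact (smul_eq_zero.1 h).resolve_left hc

end OrthogonalRows

def IsUnextendibleSV1Basis {α n m : Type*} [DecidableEq α] [Fintype n] [DecidableEq n] [Fintype m]
    (A : α → Matrix n m ℂ) : Prop :=
  (∀ i, A i * (A i)ᴴ = 1) ∧
  (∀ i j, ((A i)ᴴ * A j).trace = if i = j then (Fintype.card n : ℂ) else 0) ∧
  ∀ B : Matrix n m ℂ, (∀ i, ((A i)ᴴ * B).trace = 0) → B * Bᴴ ≠ 1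

theorem IsUnextendibleSV1Basis.comp_equiv {α β n m : Type*} [DecidableEq α] [DecidableEq β]
    [Fintype n] [DecidableEq n] [Fintype m] {A : α → Matrix n m ℂ} (hA : IsUnextendibleSV1Basis A)
    (f : β ≃ α) : IsUnextendibleSV1Basis (A ∘ f) :=
  ⟨fun i => hA.1 (f i), fun i j => by simpa [f.injective.eq_iff] using hA.2.1 (f i) (f j),
    fun B hB => hA.2.2 B fun i => by simpa using hB (f.symm i)⟩

section ShiftDiagFamily

variable {ι κ G : Type*} [Fintype ι] [DecidableEq ι] [AddCommGroup G] [Fintype G] [DecidableEq G]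

def shiftDiagFamily (e : ι → G) (W : Matrix ι ι ℂ) (U : Matrix κ ι ℂ) :
    {b : G // b ≠ 0} × ι ⊕ κ → Matrix ι G ℂ
  | .inl (b, m) => shiftDiag e b (W m)
  | .inr r => shiftDiag e 0 (U r)

theorem trace_conjTranspose_shiftDiagFamily_mul_shiftDiagFamily [DecidableEq κ] (e : ι → G)
    {W : Matrix ι ι ℂ} {U : Matrix κ ι ℂ} (hW : IsUnimodularOrthogonal W)
    (hU : IsUnimodularOrthogonal U) (i i' : {b : G // b ≠ 0} × ι ⊕ κ) :
    ((shiftDiagFamily e W U i)ᴴ * shiftDiagFamily e W U i').trace =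
      if i = i' then (Fintype.card ι : ℂ) else 0 := by
  rcases i with ⟨⟨b, hb⟩, m⟩ | r <;> rcases i' with ⟨⟨b', hb'⟩, m'⟩ | r' <;>
    simp only [shiftDiagFamily, trace_conjTranspose_shiftDiag_mul_shiftDiag,
      star_dotProduct_eq_ite_of_mul_conjTranspose hW.2,
      star_dotProduct_eq_ite_of_mul_conjTranspose hU.2, Sum.inl.injEq, Sum.inr.injEq, reduceCtorEq,
      Prod.mk.injEq, Subtype.mk.injEq, if_false]
  · exact (ite_and ..).symm
  · simp [hb]
  · simp [Ne.symm hb']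
  · simp

theorem shiftDiagFamily_unextendible [Nonempty ι] {e : ι → G} (he : Function.Injective e)
    {W : Matrix ι ι ℂ} {U : Matrix κ ι ℂ} (hW : IsUnimodularOrthogonal W)
    (hUt : ∀ t : ι → ℂ, (∀ j, t j * star (t j) = 1) → ∃ r, star (U r) ⬝ᵥ t ≠ 0)
    (B : Matrix ι G ℂ) (hB : ∀ i, ((shiftDiagFamily e W U i)ᴴ * B).trace = 0) : B * Bᴴ ≠ 1 := by
  have hoff : ∀ b ≠ 0, ∀ j, B j (e j + b) = 0 := fun b hb =>
    congrFun (eq_zero_of_forall_star_dotProduct_eq_zero (by simp) hW.2 fun m => by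
      simpa [shiftDiagFamily, trace_conjTranspose_shiftDiag_mul, dotProduct]
        using hB (.inl (⟨b, hb⟩, m)))
  intro hBB
  rw [eq_shiftDiag_of_forall_ne B e 0 hoff, shiftDiag_mul_conjTranspose_eq_one_iff he] at hBB
  obtain ⟨r, hr⟩ := hUt _ hBB
  exact hr <| by
    simpa [shiftDiagFamily, trace_conjTranspose_shiftDiag_mul, dotProduct] using hB (.inr r)

theorem isUnextendibleSV1Basis_shiftDiagFamily [DecidableEq κ] [Nonempty ι] {e : ι → G}
    (he : Function.Injective e) {W : Matrix ι ι ℂ} {U : Matrix κ ι ℂ}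
    (hW : IsUnimodularOrthogonal W) (hU : IsUnimodularOrthogonal U)
    (hUt : ∀ t : ι → ℂ, (∀ j, t j * star (t j) = 1) → ∃ r, star (U r) ⬝ᵥ t ≠ 0) :
    IsUnextendibleSV1Basis (shiftDiagFamily e W U) := by
  refine ⟨?_, trace_conjTranspose_shiftDiagFamily_mul_shiftDiagFamily e hW hU,
    shiftDiagFamily_unextendible he hW hUt⟩
  rintro (⟨b, m⟩ | r) <;> rw [shiftDiagFamily, shiftDiag_mul_conjTranspose_eq_one_iff he]
  exacts [hW.1 m, hU.1 r]

end ShiftDiagFamily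

theorem IsPrimitiveRoot.conj_eq_inv {ζ : ℂ} {n : ℕ} (h : IsPrimitiveRoot ζ n) (hn : n ≠ 0) :
    conj ζ = ζ⁻¹ :=
  (Complex.inv_eq_conj (h.norm'_eq_one hn)).symm

def fourierMatrix (n : ℕ) (ω : ℂ) : Matrix (Fin n) (Fin n) ℂ :=
  of fun m j => ω ^ ((m : ℕ) * j)

theorem fourierMatrix_mul_conjTranspose {n : ℕ} {ω : ℂ} (hω : IsPrimitiveRoot ω n) :
    fourierMatrix n ω * (fourierMatrix n ω)ᴴ = (n : ℂ) • 1 := by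
  ext m m'
  have hn : n ≠ 0 := m.pos.ne'
  have hω0 : ω ≠ 0 := hω.ne_zero hn
  set x := ω ^ (m : ℕ) / ω ^ (m' : ℕ)
  have hterm (j : Fin n) : ω ^ ((m : ℕ) * j) * star (ω ^ ((m' : ℕ) * j)) = x ^ (j : ℕ) := by
    rw [Complex.star_def, map_pow, hω.conj_eq_inv hn, inv_pow, ← div_eq_mul_inv, pow_mul, pow_mul,
      div_pow]
  have hxn : x ^ n = 1 := by
    rw [div_pow, ← pow_mul, ← pow_mul, mul_comm, pow_mul, mul_comm, pow_mul, hω.pow_eq_one,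
      one_pow, one_pow, div_one]
  have hx : x = 1 ↔ m = m' := by
    rw [div_eq_one_iff_eq (pow_ne_zero _ hω0), Fin.ext_iff]
    exact ⟨fun h => hω.pow_inj m.2 m'.2 h, fun h => h ▸ rfl⟩
  simp only [mul_apply, conjTranspose_apply, fourierMatrix, of_apply, hterm, Matrix.smul_apply,
    one_apply, smul_eq_mul, mul_ite, mul_one, mul_zero]
  rw [Fin.sum_univ_eq_sum_range (x ^ ·)]
  split_ifs with h
  · simp [hx.2 h]
  · rw [geom_sum_eq (hx.not.2 h), hxn, sub_self, zero_div]

theorem fourierMatrix_apply_mul_star {n : ℕ} {ω : ℂ} (hω : IsPrimitiveRoot ω n) (m j : Fin n) :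
    fourierMatrix n ω m j * star (fourierMatrix n ω m j) = 1 := by
  rw [Complex.star_def, Complex.mul_conj, Complex.normSq_eq_norm_sq, fourierMatrix, of_apply,
    norm_pow, hω.norm'_eq_one m.pos.ne']
  simp

theorem isUnimodularOrthogonal_fourierMatrix {n : ℕ} {ω : ℂ} (hω : IsPrimitiveRoot ω n) :
    IsUnimodularOrthogonal (fourierMatrix n ω) :=
  ⟨fourierMatrix_apply_mul_star hω, by simpa using fourierMatrix_mul_conjTranspose hω⟩

theorem IsPrimitiveRoot.pow_four_eq_neg_one {s : ℂ} (hs : IsPrimitiveRoot s 8) : s ^ 4 = -1 :=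
  (hs.pow_of_dvd (by norm_num) (by norm_num) : IsPrimitiveRoot (s ^ 4) 2).eq_neg_one_of_two_right

theorem IsPrimitiveRoot.conj_eq_neg_pow_three {s : ℂ} (hs : IsPrimitiveRoot s 8) :
    conj s = -s ^ 3 := by
  rw [hs.conj_eq_inv (by norm_num)]
  refine inv_eq_of_mul_eq_one_right ?_
  linear_combination -hs.pow_four_eq_neg_one

theorem IsPrimitiveRoot.sq_add_self_add_one {ω : ℂ} (hω : IsPrimitiveRoot ω 3) :
    ω ^ 2 + ω + 1 = 0 := by
  simpa [Finset.sum_range_succ, add_comm, add_left_comm, add_assoc]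
    using hω.geom_sum_eq_zero (by norm_num)

theorem IsPrimitiveRoot.conj_eq_sq {ω : ℂ} (hω : IsPrimitiveRoot ω 3) : conj ω = ω ^ 2 := by
  rw [hω.conj_eq_inv (by norm_num)]
  refine inv_eq_of_mul_eq_one_right ?_
  linear_combination hω.pow_eq_one

/-- Rows `0`–`2` are the vectors `ζ^(12,12,3,1,17)`, `ζ^(20,12,1,11,9)`, `ζ^(4,12,17,9,19)` of the
paper, `ζ = e^{iπ/12}`, written through `s = ζ³` and `ω = ζ⁸`; rows `3`, `4` (where `s - s³ = √2`)
complete them to an orthogonal basis of `ℂ⁵`. -/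
def umebBasis (s ω : ℂ) : Matrix (Fin 5) (Fin 5) ℂ :=
  !![-1, -1, s, s ^ 3 * ω ^ 2, s ^ 3 * ω;
     -ω, -1, s ^ 3 * ω ^ 2, s * ω, s ^ 3;
     -ω ^ 2, -1, s ^ 3 * ω, s ^ 3, s * ω ^ 2;
     s - s ^ 3, 0, 1, 1, 1;
     0, s - s ^ 3, 1, ω, ω ^ 2]

theorem umebBasis_mul_conjTranspose {s ω : ℂ} (hs : IsPrimitiveRoot s 8)
    (hω : IsPrimitiveRoot ω 3) : umebBasis s ω * (umebBasis s ω)ᴴ = (5 : ℂ) • 1 := by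
  have h4 := hs.pow_four_eq_neg_one
  have h3 := hω.sq_add_self_add_one
  ext i j
  fin_cases i <;> fin_cases j <;>
    simp [umebBasis, mul_apply, Fin.sum_univ_five, hs.conj_eq_neg_pow_three, hω.conj_eq_sq,
      one_apply] <;>
    grind

def umebVectors (s ω : ℂ) : Matrix (Fin 3) (Fin 5) ℂ :=
  (umebBasis s ω).submatrix (Fin.castLE (by norm_num)) id

theorem umebVectors_mul_conjTranspose {s ω : ℂ} (hs : IsPrimitiveRoot s 8)
    (hω : IsPrimitiveRoot ω 3) : umebVectors s ω * (umebVectors s ω)ᴴ = (5 : ℂ) • 1 := by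
  rw [umebVectors, conjTranspose_submatrix, ← submatrix_mul _ _ _ _ _ Function.bijective_id,
    umebBasis_mul_conjTranspose hs hω]
  ext i j
  simp [one_apply, (Fin.castLE_injective _).eq_iff]

theorem umebVectors_apply_mul_conj {s ω : ℂ} (hs : IsPrimitiveRoot s 8) (hω : IsPrimitiveRoot ω 3)
    (r : Fin 3) (j : Fin 5) : umebVectors s ω r j * conj (umebVectors s ω r j) = 1 := by
  have h4 := hs.pow_four_eq_neg_one
  have h3 := hω.sq_add_self_add_one
  fin_cases r <;> fin_cases j <;>
    simp [umebVectors, umebBasis, hs.conj_eq_neg_pow_three, hω.conj_eq_sq] <;> grind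

theorem isUnimodularOrthogonal_umebVectors {s ω : ℂ} (hs : IsPrimitiveRoot s 8)
    (hω : IsPrimitiveRoot ω 3) : IsUnimodularOrthogonal (umebVectors s ω) :=
  ⟨umebVectors_apply_mul_conj hs hω, by simpa using umebVectors_mul_conjTranspose hs hω⟩

theorem eq_zero_or_eq_zero_of_mul_conj_add {ω P Q : ℂ} (hω : IsPrimitiveRoot ω 3)
    (h₁ : (P + Q) * conj (P + Q) = P * conj P + Q * conj Q)
    (h₂ : (P + ω * Q) * conj (P + ω * Q) = P * conj P + Q * conj Q) : P = 0 ∨ Q = 0 := by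
  have hre₁ : P * conj Q + conj P * Q = 0 := by
    rw [map_add] at h₁
    linear_combination h₁
  have hre₂ : ω ^ 2 * (P * conj Q) + ω * (conj P * Q) = 0 := by
    rw [map_add, map_mul, hω.conj_eq_sq] at h₂
    linear_combination h₂ - Q * conj Q * hω.pow_eq_one
  have hω₂ : ω ^ 2 - ω ≠ 0 := by
    rw [sq, ← mul_sub_one]
    exact mul_ne_zero (hω.ne_zero (by norm_num)) (sub_ne_zero.2 (hω.ne_one (by norm_num)))
  have h : (ω ^ 2 - ω) * (P * conj Q) = 0 := by linear_combination hre₂ - ω * hre₁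
  simpa using (mul_eq_zero.1 h).resolve_left hω₂

theorem exists_star_dotProduct_umebVectors_ne_zero {s ω : ℂ} (hs : IsPrimitiveRoot s 8)
    (hω : IsPrimitiveRoot ω 3) (t : Fin 5 → ℂ) (ht : ∀ j, t j * star (t j) = 1) :
    ∃ r, star (umebVectors s ω r) ⬝ᵥ t ≠ 0 := by
  by_contra! h
  have hexp :=
    smul_eq_sum_star_dotProduct_smul (by norm_num) (umebBasis_mul_conjTranspose hs hω) t
  have hU : ∀ i : Fin 5, i < 3 → star (umebBasis s ω i) ⬝ᵥ t = 0 := fun i hi => h ⟨i, hi⟩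
  rw [Fin.sum_univ_five, hU 0 (by decide), hU 1 (by decide), hU 2 (by decide)] at hexp
  set P := star (umebBasis s ω 3) ⬝ᵥ t
  set Q := star (umebBasis s ω 4) ⬝ᵥ t
  -- `hexp : 5 • t = P • p + Q • q`, with `p`, `q` the last two rows of `umebBasis`
  have hnorm (j : Fin 5) {z : ℂ} (hz : 5 * t j = z) : z * conj z = 25 := by
    have htj : t j * conj (t j) = 1 := ht j
    rw [← hz, map_mul, map_ofNat]
    linear_combination 25 * htj
  have hr : (s - s ^ 3) * conj (s - s ^ 3) = 2 := by
    have h4 := hs.pow_four_eq_neg_one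
    simp only [map_sub, map_pow, hs.conj_eq_neg_pow_three]
    grind
  have hP : 2 * (P * conj P) = 25 := by
    have h0 :=
      hnorm 0 (z := (s - s ^ 3) * P) (by simpa [umebBasis, mul_comm] using congrFun hexp 0)
    rw [map_mul] at h0
    linear_combination h0 - P * conj P * hr
  have hQ : 2 * (Q * conj Q) = 25 := by
    have h1 :=
      hnorm 1 (z := (s - s ^ 3) * Q) (by simpa [umebBasis, mul_comm] using congrFun hexp 1)
    rw [map_mul] at h1
    linear_combination h1 - Q * conj Q * hr
  have h2 := hnorm 2 (z := P + Q) (by simpa [umebBasis] using congrFun hexp 2)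
  have h3 := hnorm 3 (z := P + ω * Q) (by simpa [umebBasis, mul_comm] using congrFun hexp 3)
  rcases eq_zero_or_eq_zero_of_mul_conj_add (P := P) (Q := Q) hω
    (by linear_combination h2 - hP / 2 - hQ / 2) (by linear_combination h3 - hP / 2 - hQ / 2)
    with h | h
  · simp [h] at hP
  · simp [h] at hQ

theorem exists_UMEB_5xd' (d' : ℕ) (hd' : 5 ≤ d') :
    ∃ A : Fin (5 * (d' - 1) + 3) → Matrix (Fin 5) (Fin d') ℂ,
      (∀ i, A i * (A i)ᴴ = 1) ∧
      (∀ i j, ((A i)ᴴ * A j).trace = if i = j then (5 : ℂ) else 0) ∧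
      (∀ B : Matrix (Fin 5) (Fin d') ℂ,
        (∀ i, ((A i)ᴴ * B).trace = 0) → ¬ (B * Bᴴ = 1)) := by
  have : NeZero d' := ⟨by omega⟩
  have hs := Complex.isPrimitiveRoot_exp 8 (by norm_num)
  have hω := Complex.isPrimitiveRoot_exp 3 (by norm_num)
  have hbasis := isUnextendibleSV1Basis_shiftDiagFamily (Fin.castLE_injective hd')
    (isUnimodularOrthogonal_fourierMatrix (Complex.isPrimitiveRoot_exp 5 (by norm_num)))
    (isUnimodularOrthogonal_umebVectors hs hω) (exists_star_dotProduct_umebVectors_ne_zero hs hω)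
  have hcard : Fintype.card ({b : Fin d' // b ≠ 0} × Fin 5 ⊕ Fin 3) = 5 * (d' - 1) + 3 := by
    simp [Fintype.card_subtype_compl]
    ring
  obtain ⟨hunit, horth, hunext⟩ := hbasis.comp_equiv (Fintype.equivFinOfCardEq hcard).symm
  exact ⟨_, hunit, fun i j => by simpa using horth i j, hunext⟩
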